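/- arXiv:1503.02828 — 2 statements merged into one kernel-verified Lean document; each statement's English description precedes it below -/
import Mathlib

section
/- Let Y ∈ ℝ^{m×n} have SVD Y = U diag(σ) Vᵀ with singular values σ₁ ≥ … ≥ σ_p ≥ 0, and let τ > 0. Then X* = U diag(max(σ − τ, 0)) Vᵀ minimizes X ↦ τ‖X‖_* + (1/2)‖X − Y‖_F² over all X ∈ ℝ^{m×n}. -/
/-!
Split `σ = d + c` with `d = max (σ - τ) 0` and `c = min σ τ`, and put `G = U diag(c) Vᵀ`, so that
`Y = X⋆ + G`. For `F X = τ ‖X‖⋆ + ½ ‖X - Y‖²`, expanding the square gives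

  `F X - F X⋆ = τ (‖X‖⋆ - ‖X⋆‖⋆) - ⟪X - X⋆, G⟫ + ½ ‖X - X⋆‖²`.

Since `0 ≤ c ≤ τ`, `⟪X, G⟫ = ∑ₖ cₖ (Uᵀ X V)ₖₖ ≤ τ ‖X‖⋆`, because `∑ᵢ |(P X Q)ᵢᵢ| ≤ ‖X‖⋆` for all
contractions `P`, `Q` (write `X = W diag(s) Rᵀ` from the spectral decomposition of `XᵀX` and use
`2|ab| ≤ a² + b²`). Since `c d = τ d`, `⟪X⋆, G⟫ = τ ∑ d`, while the same inequality, applied to an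
SVD of `X⋆`, gives `‖X⋆‖⋆ ≤ ∑ d`.
-/

open Matrix BigOperators

/-- Singular values of a real matrix: square roots of the eigenvalues of `Xᴴ * X`. -/
noncomputable def singVals {m n : ℕ} (X : Matrix (Fin m) (Fin n) ℝ) : Fin n → ℝ :=
  fun i => Real.sqrt ((Matrix.isHermitian_conjTranspose_mul_self X).eigenvalues i)

/-- Nuclear (trace) norm: sum of singular values. -/
noncomputable def nuclearNorm {m n : ℕ} (X : Matrix (Fin m) (Fin n) ℝ) : ℝ :=
  ∑ i, singVals X i

namespace Matrix

variable {ι κ m n : Type*} [Fintype ι] [Fintype κ] [Fintype m] [Fintype n]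

def IsContraction (A : Matrix m n ℝ) : Prop :=
  ∀ x : n → ℝ, A *ᵥ x ⬝ᵥ A *ᵥ x ≤ x ⬝ᵥ x

theorem two_mul_dotProduct_le (x y : n → ℝ) : 2 * (x ⬝ᵥ y) ≤ x ⬝ᵥ x + y ⬝ᵥ y := by
  have : 0 ≤ (x - y) ⬝ᵥ (x - y) := Finset.sum_nonneg fun i _ => mul_self_nonneg _
  simp only [sub_dotProduct, dotProduct_sub, dotProduct_comm y x] at this
  linarith

namespace IsContraction

theorem transpose {A : Matrix m n ℝ} (hA : IsContraction A) : IsContraction Aᵀ := by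
  intro x
  set y := Aᵀ *ᵥ x
  have hy : y ⬝ᵥ y = x ⬝ᵥ A *ᵥ y := by
    rw [dotProduct_mulVec, vecMul_transpose, dotProduct_comm]
  linarith [hA y, two_mul_dotProduct_le x (A *ᵥ y)]

theorem mul {A : Matrix m n ℝ} {B : Matrix n κ ℝ} (hA : IsContraction A)
    (hB : IsContraction B) : IsContraction (A * B) := fun x => by
  simpa only [← mulVec_mulVec] using (hA (B *ᵥ x)).trans (hB x)

theorem sum_sq_apply_le [DecidableEq n] {A : Matrix m n ℝ} (hA : IsContraction A) (k : n) :
    ∑ i, A i k ^ 2 ≤ 1 := by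
  simpa [mulVec_single_one, dotProduct, sq, Pi.single_apply] using hA (Pi.single k 1)

end IsContraction

theorem isContraction_of_transpose_mul_self_eq_diagonal [DecidableEq n] {A : Matrix m n ℝ}
    {e : n → ℝ} (hA : Aᵀ * A = diagonal e) (he : ∀ k, e k ≤ 1) : IsContraction A := by
  intro x
  have hnorm : A *ᵥ x ⬝ᵥ A *ᵥ x = ∑ k, e k * x k * x k := by
    rw [dotProduct_mulVec, ← vecMul_transpose, vecMul_vecMul, ← mulVec_transpose,
      transpose_mul, transpose_transpose, hA]
    simp [dotProduct, mulVec_diagonal]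
  rw [hnorm]
  exact Finset.sum_le_sum fun k _ => by nlinarith [he k, mul_self_nonneg (x k)]

theorem isContraction_of_transpose_mul_self_eq_one [DecidableEq n] {A : Matrix m n ℝ}
    (hA : Aᵀ * A = 1) : IsContraction A :=
  isContraction_of_transpose_mul_self_eq_diagonal (hA.trans diagonal_one.symm) fun _ => le_rfl

theorem sum_abs_diag_mul_diagonal_mul_le [DecidableEq κ] {M : Matrix ι κ ℝ} {N : Matrix κ ι ℝ}
    (hM : IsContraction M) (hN : IsContraction N) {s : κ → ℝ} (hs : ∀ k, 0 ≤ s k) :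
    ∑ i, |(M * diagonal s * N) i i| ≤ ∑ k, s k := by
  have hterm : ∀ i k, |M i k * s k * N k i| ≤ s k * (M i k ^ 2 + N k i ^ 2) / 2 := fun i k => by
    rw [abs_le]
    constructor <;> nlinarith [mul_nonneg (hs k) (sq_nonneg (M i k - N k i)),
      mul_nonneg (hs k) (sq_nonneg (M i k + N k i))]
  calc ∑ i, |(M * diagonal s * N) i i|
      ≤ ∑ i, ∑ k, s k * (M i k ^ 2 + N k i ^ 2) / 2 := by
        refine Finset.sum_le_sum fun i _ => ?_
        simp only [mul_apply (M := M * diagonal s), mul_diagonal]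
        exact (Finset.abs_sum_le_sum_abs _ _).trans (Finset.sum_le_sum fun k _ => hterm i k)
    _ = ∑ k, s k * ((∑ i, M i k ^ 2) + ∑ i, Nᵀ i k ^ 2) / 2 := by
        rw [Finset.sum_comm]
        simp only [Finset.mul_sum, Finset.sum_div, ← Finset.sum_add_distrib, mul_add, add_div,
          transpose_apply]
    _ ≤ ∑ k, s k := Finset.sum_le_sum fun k _ => by
        nlinarith [hs k, hM.sum_sq_apply_le k, hN.transpose.sum_sq_apply_le k]

theorem exists_isContraction_mul_diagonal_eq [DecidableEq n] {Z : Matrix m n ℝ} {s : n → ℝ}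
    (hZ : Zᵀ * Z = diagonal fun j => s j ^ 2) :
    ∃ W : Matrix m n ℝ, IsContraction W ∧ W * diagonal s = Z ∧ Wᵀ * Z = diagonal s := by
  -- Where `s j = 0`, the junk value `(s j)⁻¹ = 0` is harmless: column `j` of `Z` vanishes.
  refine ⟨Z * diagonal fun j => (s j)⁻¹, ?_, ?_, ?_⟩
  · refine isContraction_of_transpose_mul_self_eq_diagonal
      (e := fun j => (s j)⁻¹ * (s j ^ 2 * (s j)⁻¹)) ?_ fun j => ?_
    · rw [transpose_mul, diagonal_transpose, Matrix.mul_assoc, ← Matrix.mul_assoc Zᵀ, hZ,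
        diagonal_mul_diagonal, diagonal_mul_diagonal]
    · by_cases hs : s j = 0 <;> simp [hs, sq]
  · have hcol : ∀ i j, s j = 0 → Z i j = 0 := fun i j hs => by
      have : ∑ i, Z i j * Z i j = 0 := by simpa [mul_apply, hs] using congr_fun₂ hZ j j
      exact mul_self_eq_zero.mp
        ((Finset.sum_eq_zero_iff_of_nonneg fun i _ => mul_self_nonneg _).mp this i (by simp))
    ext i j
    by_cases hs : s j = 0
    · simp [hs, hcol i j hs]
    · simp [hs]
  · rw [transpose_mul, diagonal_transpose, Matrix.mul_assoc, hZ, diagonal_mul_diagonal]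
    congr 1
    funext j
    by_cases hs : s j = 0
    · simp [hs]
    · field_simp

namespace IsHermitian

variable [DecidableEq n] {A : Matrix n n ℝ}

theorem transpose_eigenvectorUnitary_mul_self (hA : A.IsHermitian) :
    (hA.eigenvectorUnitary : Matrix n n ℝ)ᵀ * hA.eigenvectorUnitary = 1 := by
  simpa [star_eq_conjTranspose] using Unitary.coe_star_mul_self hA.eigenvectorUnitary

theorem transpose_eigenvectorUnitary_mul_mul (hA : A.IsHermitian) :
    (hA.eigenvectorUnitary : Matrix n n ℝ)ᵀ * A * hA.eigenvectorUnitary =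
      diagonal hA.eigenvalues := by
  simpa [star_eq_conjTranspose] using hA.conjStarAlgAut_star_eigenvectorUnitary

end IsHermitian

theorem sum_sum_mul_mul_diagonal_mul_transpose [DecidableEq κ] (X : Matrix m n ℝ)
    (A : Matrix m κ ℝ) (B : Matrix n κ ℝ) (c : κ → ℝ) :
    ∑ i, ∑ j, X i j * (A * diagonal c * Bᵀ) i j = ∑ k, c k * (Aᵀ * X * B) k k := by
  simp only [mul_apply (M := A * diagonal c), mul_diagonal, mul_apply (M := Aᵀ * X),
    mul_apply (M := Aᵀ), transpose_apply, Finset.mul_sum, Finset.sum_mul]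
  rw [Finset.sum_comm_cycle]
  refine Finset.sum_congr rfl fun k _ => ?_
  rw [Finset.sum_comm]
  exact Finset.sum_congr rfl fun j _ => Finset.sum_congr rfl fun i _ => by ring

theorem sum_sq_sub_add_eq (X Z G : Matrix m n ℝ) :
    ∑ i, ∑ j, (X i j - (Z + G) i j) ^ 2 =
      ∑ i, ∑ j, (Z i j - (Z + G) i j) ^ 2 +
        2 * (∑ i, ∑ j, Z i j * G i j - ∑ i, ∑ j, X i j * G i j) +
          ∑ i, ∑ j, (X i j - Z i j) ^ 2 := by
  simp only [Finset.mul_sum, ← Finset.sum_sub_distrib, ← Finset.sum_add_distrib]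
  exact Finset.sum_congr rfl fun i _ => Finset.sum_congr rfl fun j _ => by
    rw [Matrix.add_apply]; ring

end Matrix

theorem exists_svd {m n : ℕ} (X : Matrix (Fin m) (Fin n) ℝ) :
    ∃ (W : Matrix (Fin m) (Fin n) ℝ) (Q : Matrix (Fin n) (Fin n) ℝ),
      IsContraction W ∧ IsContraction Q ∧ X = W * diagonal (singVals X) * Qᵀ ∧
        Wᵀ * X * Q = diagonal (singVals X) := by
  set hX := isHermitian_conjTranspose_mul_self X
  set Q : Matrix (Fin n) (Fin n) ℝ := ↑hX.eigenvectorUnitary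
  have hQ : Qᵀ * Q = 1 := hX.transpose_eigenvectorUnitary_mul_self
  have hXQ : (X * Q)ᵀ * (X * Q) = diagonal fun j => singVals X j ^ 2 := calc
    (X * Q)ᵀ * (X * Q) = Qᵀ * (Xᴴ * X) * Q := by
      rw [transpose_mul]
      simp only [Matrix.mul_assoc]
      rfl
    _ = diagonal fun j => singVals X j ^ 2 := by
      rw [hX.transpose_eigenvectorUnitary_mul_mul]
      congr 1
      funext j
      exact (Real.sq_sqrt (eigenvalues_conjTranspose_mul_self_nonneg X j)).symm
  obtain ⟨W, hW, hWs, hWX⟩ := exists_isContraction_mul_diagonal_eq hXQ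
  refine ⟨W, Q, hW, isContraction_of_transpose_mul_self_eq_one hQ, ?_, ?_⟩
  · rw [hWs, Matrix.mul_assoc, mul_eq_one_comm.mp hQ, Matrix.mul_one]
  · rw [Matrix.mul_assoc, hWX]

theorem sum_abs_diag_mul_mul_le_nuclearNorm {ι : Type*} [Fintype ι] {m n : ℕ}
    (X : Matrix (Fin m) (Fin n) ℝ) {P : Matrix ι (Fin m) ℝ} {Q : Matrix (Fin n) ι ℝ}
    (hP : IsContraction P) (hQ : IsContraction Q) :
    ∑ i, |(P * X * Q) i i| ≤ nuclearNorm X := by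
  obtain ⟨W, R, hW, hR, hX, -⟩ := exists_svd X
  have hPXQ : P * X * Q = (P * W) * diagonal (singVals X) * (Rᵀ * Q) := by
    conv_lhs => rw [hX]
    simp only [Matrix.mul_assoc]
  rw [hPXQ]
  exact sum_abs_diag_mul_diagonal_mul_le (hP.mul hW) (hR.transpose.mul hQ)
    fun j => Real.sqrt_nonneg _

theorem nuclearNorm_mul_diagonal_mul_le {κ : Type*} [Fintype κ] [DecidableEq κ] {m n : ℕ}
    {A : Matrix (Fin m) κ ℝ} {B : Matrix κ (Fin n) ℝ} (hA : IsContraction A)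
    (hB : IsContraction B) {s : κ → ℝ} (hs : ∀ k, 0 ≤ s k) :
    nuclearNorm (A * diagonal s * B) ≤ ∑ k, s k := by
  obtain ⟨W, R, hW, hR, -, hWXR⟩ := exists_svd (A * diagonal s * B)
  have hWXR' : Wᵀ * (A * diagonal s * B) * R = (Wᵀ * A) * diagonal s * (B * R) := by
    simp only [Matrix.mul_assoc]
  calc nuclearNorm (A * diagonal s * B)
      = ∑ j, (Wᵀ * (A * diagonal s * B) * R) j j := by simp [hWXR, nuclearNorm]
    _ ≤ ∑ j, |(Wᵀ * (A * diagonal s * B) * R) j j| :=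
        Finset.sum_le_sum fun j _ => le_abs_self _
    _ ≤ ∑ k, s k := by
        rw [hWXR']
        exact sum_abs_diag_mul_diagonal_mul_le (hW.transpose.mul hA) (hB.mul hR) hs

theorem max_sub_zero_add_min (a t : ℝ) : max (a - t) 0 + min a t = a := by
  rcases le_total a t with h | h <;> simp [h]

theorem min_mul_max_sub_zero (a t : ℝ) : min a t * max (a - t) 0 = t * max (a - t) 0 := by
  rcases le_total a t with h | h <;> simp [h]

theorem stmt6_general {m n p : ℕ} (Y : Matrix (Fin m) (Fin n) ℝ)
    (U : Matrix (Fin m) (Fin p) ℝ) (V : Matrix (Fin n) (Fin p) ℝ) (σ : Fin p → ℝ)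
    (hU : Uᵀ * U = 1) (hV : Vᵀ * V = 1)
    (hσ : ∀ i, 0 ≤ σ i)
    (hY : Y = U * Matrix.diagonal σ * Vᵀ)
    (τ : ℝ) (hτ : 0 < τ) :
    let Xstar : Matrix (Fin m) (Fin n) ℝ :=
      U * Matrix.diagonal (fun i => max (σ i - τ) 0) * Vᵀ
    ∀ X : Matrix (Fin m) (Fin n) ℝ,
      τ * nuclearNorm Xstar + (1 / 2) * ∑ i, ∑ j, (Xstar i j - Y i j) ^ 2 ≤
        τ * nuclearNorm X + (1 / 2) * ∑ i, ∑ j, (X i j - Y i j) ^ 2 := by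
  intro Xstar X
  set d : Fin p → ℝ := fun i => max (σ i - τ) 0
  set c : Fin p → ℝ := fun i => min (σ i) τ
  have hUc := isContraction_of_transpose_mul_self_eq_one hU
  have hVc := isContraction_of_transpose_mul_self_eq_one hV
  have hsplit : Y = Xstar + U * diagonal c * Vᵀ := by
    rw [hY, ← Matrix.add_mul, ← Matrix.mul_add, diagonal_add]
    simp only [c, max_sub_zero_add_min]
  have hXstar : ∑ k, c k * (Uᵀ * Xstar * V) k k = τ * ∑ k, d k := by
    have hdiag : Uᵀ * Xstar * V = diagonal d := by
      simp only [Xstar, Matrix.mul_assoc, hV, Matrix.mul_one, ← Matrix.mul_assoc Uᵀ, hU,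
        Matrix.one_mul]
      rfl
    simp [hdiag, Finset.mul_sum, c, d, min_mul_max_sub_zero]
  have hX : ∑ k, c k * (Uᵀ * X * V) k k ≤ τ * nuclearNorm X := calc
    _ ≤ ∑ k, τ * |(Uᵀ * X * V) k k| := Finset.sum_le_sum fun k _ =>
        (mul_le_mul_of_nonneg_left (le_abs_self _) (le_min (hσ k) hτ.le)).trans
          (mul_le_mul_of_nonneg_right (min_le_right _ _) (abs_nonneg _))
    _ ≤ τ * nuclearNorm X := by
        rw [← Finset.mul_sum]
        exact mul_le_mul_of_nonneg_left
          (sum_abs_diag_mul_mul_le_nuclearNorm X hUc.transpose hVc) hτ.le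
  have hnuc : τ * nuclearNorm Xstar ≤ τ * ∑ k, d k := mul_le_mul_of_nonneg_left
    (nuclearNorm_mul_diagonal_mul_le hUc hVc.transpose fun _ => le_max_right _ _) hτ.le
  have hsq : 0 ≤ ∑ i, ∑ j, (X i j - Xstar i j) ^ 2 :=
    Finset.sum_nonneg fun i _ => Finset.sum_nonneg fun j _ => sq_nonneg _
  rw [hsplit, sum_sq_sub_add_eq X Xstar, sum_sum_mul_mul_diagonal_mul_transpose,
    sum_sum_mul_mul_diagonal_mul_transpose]
  linarith

theorem stmt6 {m n p : ℕ} (Y : Matrix (Fin m) (Fin n) ℝ)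
    (U : Matrix (Fin m) (Fin p) ℝ) (V : Matrix (Fin n) (Fin p) ℝ) (σ : Fin p → ℝ)
    (hU : Uᵀ * U = 1) (hV : Vᵀ * V = 1)
    (hσ : ∀ i, 0 ≤ σ i) (hsort : Antitone σ)
    (hY : Y = U * Matrix.diagonal σ * Vᵀ)
    (τ : ℝ) (hτ : 0 < τ) :
    let Xstar : Matrix (Fin m) (Fin n) ℝ :=
      U * Matrix.diagonal (fun i => max (σ i - τ) 0) * Vᵀ
    ∀ X : Matrix (Fin m) (Fin n) ℝ,
      τ * nuclearNorm Xstar + (1 / 2) * ∑ i, ∑ j, (Xstar i j - Y i j) ^ 2 ≤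
        τ * nuclearNorm X + (1 / 2) * ∑ i, ∑ j, (X i j - Y i j) ^ 2 :=
  stmt6_general Y U V σ hU hV hσ hY τ hτ
end

section
/- If X ∈ M_{≤r} has rank s < r, G ∈ ℝ^{m×n}, and Ξ_{r−s} is a best rank-(r−s) approximation of G − P_{T_X M_s}(G) whose column and row spaces are orthogonal to those of X, then ⟨G, Ξ_{r−s}⟩ = ‖Ξ_{r−s}‖_F². -/
open Matrix BigOperators

/-- Frobenius norm. -/
noncomputable def frobNorm {m n : ℕ} (X : Matrix (Fin m) (Fin n) ℝ) : ℝ :=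
  Real.sqrt (∑ i, ∑ j, (X i j) ^ 2)

open scoped RealInnerProductSpace

/-!
The residual `R = G - P_{T_X M_s}(G)` differs from `G` by a tangent vector `U A + B Vᵀ`, which is
Frobenius-orthogonal to `Ξ` because `Uᵀ Ξ = 0` and `Ξ V = 0`; hence `⟨G, Ξ⟩ = ⟨R, Ξ⟩`. Every
multiple `t Ξ` again has rank at most `r - s`, so `Ξ` is in particular the best approximation of `R`
on the line `ℝ Ξ`; this makes `R - Ξ` orthogonal to `Ξ`, i.e. `⟨R, Ξ⟩ = ‖Ξ‖_F²`.
-/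

section InnerProduct

variable {F : Type*} [NormedAddCommGroup F] [InnerProductSpace ℝ F]

/- The gap ‖x - t y‖² - ‖x - y‖² equals (t - 1)((t + 1)‖y‖² - 2⟪x, y⟫); at t = ⟪x, y⟫ / ‖y‖²
it is -(⟪x, y⟫ - ‖y‖²)² / ‖y‖². -/
theorem real_inner_eq_norm_sq_of_forall_norm_sub_le {x y : F}
    (h : ∀ t : ℝ, ‖x - y‖ ≤ ‖x - t • y‖) : ⟪x, y⟫ = ‖y‖ ^ 2 := by
  rcases eq_or_ne y 0 with rfl | hy
  · simp
  have hb : 0 < ‖y‖ ^ 2 := by positivity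
  set t := ⟪x, y⟫ / ‖y‖ ^ 2
  have hsq : ‖x - y‖ ^ 2 ≤ ‖x - t • y‖ ^ 2 := by gcongr; exact h t
  rw [norm_sub_sq_real, norm_sub_sq_real, real_inner_smul_right, norm_smul,
    Real.norm_eq_abs, mul_pow, sq_abs] at hsq
  have ht : t * ‖y‖ ^ 2 = ⟪x, y⟫ := div_mul_cancel₀ _ hb.ne'
  nlinarith [sq_nonneg (⟪x, y⟫ - ‖y‖ ^ 2)]

end InnerProduct

namespace Matrix

variable {m n : Type*}

def toEuclidean [Fintype m] [Fintype n] : Matrix m n ℝ →ₗ[ℝ] EuclideanSpace ℝ (m × n) where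
  toFun A := WithLp.toLp 2 fun p => A p.1 p.2
  map_add' _ _ := rfl
  map_smul' _ _ := rfl

@[simp]
theorem toEuclidean_apply [Fintype m] [Fintype n] (A : Matrix m n ℝ) (p : m × n) :
    toEuclidean A p = A p.1 p.2 :=
  rfl

theorem sum_sum_sq_eq_norm_toEuclidean_sq [Fintype m] [Fintype n] (A : Matrix m n ℝ) :
    ∑ i, ∑ j, A i j ^ 2 = ‖toEuclidean A‖ ^ 2 := by
  rw [EuclideanSpace.norm_eq, Real.sq_sqrt (by positivity), ← Finset.sum_product']
  simp

theorem trace_mul_transpose_eq_inner_toEuclidean [Fintype m] [Fintype n] (A B : Matrix m n ℝ) :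
    trace (A * Bᵀ) = ⟪toEuclidean A, toEuclidean B⟫ := by
  simp [trace, mul_apply, PiLp.inner_apply, ← Finset.sum_product', mul_comm]

theorem frobNorm_eq_norm_toEuclidean {p q : ℕ} (A : Matrix (Fin p) (Fin q) ℝ) :
    frobNorm A = ‖toEuclidean A‖ := by
  rw [frobNorm, sum_sum_sq_eq_norm_toEuclidean_sq, Real.sqrt_sq (norm_nonneg _)]

theorem rank_smul_le {𝕜 : Type*} [Field 𝕜] [Fintype m] [Fintype n] [DecidableEq m] (c : 𝕜)
    (A : Matrix m n 𝕜) :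
    (c • A).rank ≤ A.rank := by
  rw [smul_eq_diagonal_mul]
  exact rank_mul_le_right _ _

theorem trace_mul_transpose_eq_sum_sq_of_forall_frobNorm_sub_le {p q : ℕ}
    {R Ξ : Matrix (Fin p) (Fin q) ℝ} (h : ∀ t : ℝ, frobNorm (R - Ξ) ≤ frobNorm (R - t • Ξ)) :
    trace (R * Ξᵀ) = ∑ i, ∑ j, Ξ i j ^ 2 := by
  rw [trace_mul_transpose_eq_inner_toEuclidean, sum_sum_sq_eq_norm_toEuclidean_sq]
  refine real_inner_eq_norm_sq_of_forall_norm_sub_le fun t => ?_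
  simpa only [frobNorm_eq_norm_toEuclidean, map_sub, map_smul] using h t

variable {k : Type*} [Fintype m] [Fintype n] [Fintype k]

theorem trace_mul_transpose_mul_transpose_eq_zero {V : Matrix n k ℝ} {Ξ : Matrix m n ℝ}
    (hrow : Ξ * V = 0) (A : Matrix m k ℝ) : trace (A * Vᵀ * Ξᵀ) = 0 := by
  rw [Matrix.mul_assoc, ← transpose_mul, hrow, transpose_zero, Matrix.mul_zero, trace_zero]

theorem trace_mul_mul_transpose_eq_zero {U : Matrix m k ℝ} {Ξ : Matrix m n ℝ}
    (hcol : Uᵀ * Ξ = 0) (A : Matrix k n ℝ) : trace (U * A * Ξᵀ) = 0 := by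
  rw [trace_mul_cycle, ← transpose_transpose U, ← transpose_mul, hcol,
    transpose_zero, Matrix.zero_mul, trace_zero]

variable [DecidableEq m] [DecidableEq n]

/-- `P_{T_X M_s}` at `X = U diag(σ) Vᵀ`, with `P_U = U Uᵀ` and `P_V = V Vᵀ`. -/
def tangentProj (U : Matrix m k ℝ) (V : Matrix n k ℝ) (G : Matrix m n ℝ) : Matrix m n ℝ :=
  U * Uᵀ * G * (V * Vᵀ) + (1 - U * Uᵀ) * G * (V * Vᵀ) + U * Uᵀ * G * (1 - V * Vᵀ)

theorem trace_tangentProj_mul_transpose_eq_zero {U : Matrix m k ℝ} {V : Matrix n k ℝ}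
    {Ξ : Matrix m n ℝ} (hcol : Uᵀ * Ξ = 0) (hrow : Ξ * V = 0) (G : Matrix m n ℝ) :
    trace (tangentProj U V G * Ξᵀ) = 0 := by
  have hsplit : tangentProj U V G =
      (U * Uᵀ * G * V) * Vᵀ + ((1 - U * Uᵀ) * G * V) * Vᵀ + U * (Uᵀ * G * (1 - V * Vᵀ)) := by
    simp only [tangentProj, Matrix.mul_assoc]
  rw [hsplit, Matrix.add_mul, Matrix.add_mul, trace_add, trace_add,
    trace_mul_transpose_mul_transpose_eq_zero hrow, trace_mul_transpose_mul_transpose_eq_zero hrow,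
    trace_mul_mul_transpose_eq_zero hcol, add_zero, add_zero]

end Matrix

theorem stmt19_general {m n s r : ℕ}
    (U : Matrix (Fin m) (Fin s) ℝ) (V : Matrix (Fin n) (Fin s) ℝ)
    (G : Matrix (Fin m) (Fin n) ℝ)
    (Ξ : Matrix (Fin m) (Fin n) ℝ)
    -- the column and row spaces of Ξ are orthogonal to those of X
    (hcol : Uᵀ * Ξ = 0) (hrow : Ξ * V = 0)
    (hrankΞ : Ξ.rank ≤ r - s)
    -- Ξ is a best rank-(r-s) approximation of the residual G - P_{T_X M_s}(G)
    (hbest :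
      let PU : Matrix (Fin m) (Fin m) ℝ := U * Uᵀ
      let PV : Matrix (Fin n) (Fin n) ℝ := V * Vᵀ
      let R : Matrix (Fin m) (Fin n) ℝ :=
        G - (PU * G * PV + (1 - PU) * G * PV + PU * G * (1 - PV))
      ∀ W : Matrix (Fin m) (Fin n) ℝ, W.rank ≤ r - s → frobNorm (R - Ξ) ≤ frobNorm (R - W)) :
    Matrix.trace (G * Ξᵀ) = ∑ i, ∑ j, (Ξ i j) ^ 2 := by
  have hopt : ∀ t : ℝ, frobNorm (G - tangentProj U V G - Ξ) ≤
      frobNorm (G - tangentProj U V G - t • Ξ) :=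
    fun t => hbest (t • Ξ) ((rank_smul_le t Ξ).trans hrankΞ)
  calc trace (G * Ξᵀ) = trace ((G - tangentProj U V G) * Ξᵀ) := by
        rw [Matrix.sub_mul, trace_sub, trace_tangentProj_mul_transpose_eq_zero hcol hrow, sub_zero]
    _ = ∑ i, ∑ j, Ξ i j ^ 2 := trace_mul_transpose_eq_sum_sq_of_forall_frobNorm_sub_le hopt

theorem stmt19 {m n s r : ℕ} (hsr : s < r)
    (X : Matrix (Fin m) (Fin n) ℝ)
    (U : Matrix (Fin m) (Fin s) ℝ) (V : Matrix (Fin n) (Fin s) ℝ) (σ : Fin s → ℝ)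
    (hU : Uᵀ * U = 1) (hV : Vᵀ * V = 1)
    (hX : X = U * Matrix.diagonal σ * Vᵀ) (hrank : X.rank = s)
    (G : Matrix (Fin m) (Fin n) ℝ)
    (Ξ : Matrix (Fin m) (Fin n) ℝ)
    -- the column and row spaces of Ξ are orthogonal to those of X
    (hcol : Uᵀ * Ξ = 0) (hrow : Ξ * V = 0)
    (hrankΞ : Ξ.rank ≤ r - s)
    -- Ξ is a best rank-(r-s) approximation of the residual G - P_{T_X M_s}(G)
    (hbest :
      let PU : Matrix (Fin m) (Fin m) ℝ := U * Uᵀ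
      let PV : Matrix (Fin n) (Fin n) ℝ := V * Vᵀ
      let R : Matrix (Fin m) (Fin n) ℝ :=
        G - (PU * G * PV + (1 - PU) * G * PV + PU * G * (1 - PV))
      ∀ W : Matrix (Fin m) (Fin n) ℝ, W.rank ≤ r - s → frobNorm (R - Ξ) ≤ frobNorm (R - W)) :
    Matrix.trace (G * Ξᵀ) = ∑ i, ∑ j, (Ξ i j) ^ 2 :=
  stmt19_general U V G Ξ hcol hrow hrankΞ hbest
end
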